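/- Alikhanov's inequality: let H be a real Hilbert space, 0<α<1, and v∈C¹([0,T];H). Then for every t∈(0,T], ∂_t^α(‖v‖²)(t) ≤ 2⟨(∂_t^α v)(t), v(t)⟩; explicitly, ∫₀ᵗ ω_{1−α}(t−s) · (d/ds ‖v(s)‖²) ds ≤ 2⟨∫₀ᵗ ω_{1−α}(t−s) v'(s) ds, v(t)⟩. -/

import Mathlib

/-!
Write `K s = ω_{1-α}(t - s)` and `g s = ‖v s - v t‖²`, so that `g' s = 2⟪v s - v t, v' s⟫` and
the difference of the two sides is `∫₀ᵗ K g'`. For `x < t`, integration by parts gives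
`∫₀ˣ K g' = K x g x - K 0 g 0 - ∫₀ˣ K' g ≤ K x g x`, because `K ≥ 0`, `K' ≥ 0` (as `α > 0`) and
`g ≥ 0`. Since `v` is Lipschitz, `g x ≤ M² (t - x)²`, hence `K x g x = O((t - x)^(2 - α)) → 0`
as `x → t⁻`, and `∫₀ᵗ K g' ≤ 0` follows by continuity of the primitive.
-/

open MeasureTheory intervalIntegral RealInnerProductSpace

/-- The Riemann–Liouville kernel `ω_α(t) = t^(α-1)/Γ(α)`. -/
noncomputable def rlKernel (α t : ℝ) : ℝ := t ^ (α - 1) / Real.Gamma α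

open Set Filter Topology

section Kernel

variable {β : ℝ}

lemma rlKernel_nonneg (hβ : 0 < β) {x : ℝ} (hx : 0 ≤ x) : 0 ≤ rlKernel β x :=
  div_nonneg (Real.rpow_nonneg hx _) (Real.Gamma_pos_of_pos hβ).le

lemma hasDerivAt_rlKernel_sub {t s : ℝ} (hs : s < t) :
    HasDerivAt (fun s => rlKernel β (t - s)) ((1 - β) * (t - s) ^ (β - 2) / Real.Gamma β) s := by
  have h := ((Real.hasDerivAt_rpow_const (p := β - 1) (Or.inl (sub_pos.mpr hs).ne')).div_const
    (Real.Gamma β)).comp_const_sub t s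
  exact h.congr_deriv (by ring_nf)

lemma intervalIntegrable_rlKernel_sub (hβ : 0 < β) (a t : ℝ) :
    IntervalIntegrable (fun s => rlKernel β (t - s)) volume a t := by
  have h : IntervalIntegrable (fun x : ℝ => x ^ (β - 1)) volume (t - a) 0 :=
    intervalIntegrable_rpow' (by linarith)
  simpa [rlKernel] using (h.comp_sub_left t).div_const (Real.Gamma β)

lemma tendsto_rlKernel_sub_mul_sq (hβ : -1 < β) (t : ℝ) :
    Tendsto (fun x => rlKernel β (t - x) * (t - x) ^ 2) (𝓝[<] t) (𝓝 0) := by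
  have hcont : ContinuousAt (fun x => (t - x) ^ (β + 1) / Real.Gamma β) t :=
    ((Real.continuousAt_rpow_const _ _ (Or.inr (by linarith))).comp
      (continuous_sub_left t).continuousAt).div_const _
  have h0 : (t - t) ^ (β + 1) / Real.Gamma β = 0 := by
    rw [sub_self, Real.zero_rpow (by linarith), zero_div]
  refine (h0 ▸ hcont.tendsto).mono_left nhdsWithin_le_nhds |>.congr' ?_
  filter_upwards [self_mem_nhdsWithin] with x hx
  have hx : 0 < t - x := sub_pos.mpr hx
  rw [rlKernel, div_mul_eq_mul_div, ← Real.rpow_natCast, ← Real.rpow_add hx]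
  ring_nf

end Kernel

lemma integral_mul_deriv_le_of_deriv_nonneg {K K' g g' : ℝ → ℝ} {a b : ℝ} (hab : a ≤ b)
    (hK : ∀ s ∈ Icc a b, HasDerivAt K (K' s) s) (hg : ∀ s ∈ Icc a b, HasDerivAt g (g' s) s)
    (hK'int : IntervalIntegrable K' volume a b) (hg'int : IntervalIntegrable g' volume a b)
    (hK' : ∀ s ∈ Icc a b, 0 ≤ K' s) (hg0 : ∀ s ∈ Icc a b, 0 ≤ g s) (hKa : 0 ≤ K a) :
    ∫ s in a..b, K s * g' s ≤ K b * g b := by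
  rw [← uIcc_of_le hab] at hK hg
  have hibp := integral_mul_deriv_eq_deriv_mul hK hg hK'int hg'int
  have hboundary : 0 ≤ K a * g a := mul_nonneg hKa (hg0 a (left_mem_Icc.mpr hab))
  have hbulk : 0 ≤ ∫ s in a..b, K' s * g s :=
    integral_nonneg hab fun s hs => mul_nonneg (hK' s hs) (hg0 s hs)
  linarith

theorem integral_rlKernel_sub_mul_deriv_nonpos {β a t : ℝ} (hβ0 : 0 < β) (hβ1 : β ≤ 1)
    (hat : a < t) {g g' : ℝ → ℝ} (hg : ∀ s ∈ Icc a t, HasDerivAt g (g' s) s)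
    (hg' : ContinuousOn g' (Icc a t)) (hg0 : ∀ s ∈ Icc a t, 0 ≤ g s)
    (hlim : Tendsto (fun x => rlKernel β (t - x) * g x) (𝓝[<] t) (𝓝 0)) :
    ∫ s in a..t, rlKernel β (t - s) * g' s ≤ 0 := by
  set F : ℝ → ℝ := fun x => ∫ s in a..x, rlKernel β (t - s) * g' s
  have hint : IntegrableOn (fun s => rlKernel β (t - s) * g' s) (Icc a t) := by
    rw [integrableOn_Icc_iff_integrableOn_Ioc, ← intervalIntegrable_iff_integrableOn_Ioc_of_le
      hat.le]
    exact (intervalIntegrable_rlKernel_sub hβ0 a t).mul_continuousOn (by rwa [uIcc_of_le hat.le])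
  have hF : Tendsto F (𝓝[<] t) (𝓝 (F t)) := by
    have := (continuousOn_primitive_interval (uIcc_of_le hat.le ▸ hint)) t right_mem_uIcc
    rw [uIcc_of_le hat.le] at this
    exact this.mono_of_mem_nhdsWithin (Icc_mem_nhdsLT hat)
  have hbound : ∀ x ∈ Ico a t, F x ≤ rlKernel β (t - x) * g x := by
    intro x ⟨hax, hxt⟩
    have hsub : Icc a x ⊆ Icc a t := Icc_subset_Icc_right hxt.le
    refine integral_mul_deriv_le_of_deriv_nonneg hax
      (fun s hs => hasDerivAt_rlKernel_sub (hs.2.trans_lt hxt)) (fun s hs => hg s (hsub hs)) ?_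
      ((hg'.mono hsub).intervalIntegrable_of_Icc hax) ?_ (fun s hs => hg0 s (hsub hs))
      (rlKernel_nonneg hβ0 (by linarith))
    · refine ContinuousOn.intervalIntegrable_of_Icc hax ?_
      refine (ContinuousOn.mul continuousOn_const ?_).div_const _
      exact ContinuousOn.rpow_const (by fun_prop) fun s hs =>
        Or.inl (sub_pos.mpr (hs.2.trans_lt hxt)).ne'
    · intro s hs
      exact div_nonneg (mul_nonneg (by linarith) (Real.rpow_nonneg (by linarith [hs.2]) _))
        (Real.Gamma_pos_of_pos hβ0).le
  refine le_of_tendsto_of_tendsto hF hlim ?_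
  filter_upwards [Ico_mem_nhdsLT hat] with x hx using hbound x hx

theorem integral_rlKernel_sub_mul_inner_sub_nonpos {H : Type*} [NormedAddCommGroup H]
    [InnerProductSpace ℝ H] {β a t : ℝ} (hβ0 : 0 < β) (hβ1 : β ≤ 1) (hat : a < t)
    {v v' : ℝ → H} (hv : ∀ s ∈ Icc a t, HasDerivAt v (v' s) s)
    (hv' : ContinuousOn v' (Icc a t)) :
    ∫ s in a..t, rlKernel β (t - s) * ⟪v s - v t, v' s⟫ ≤ 0 := by
  obtain ⟨M, hM⟩ := (isCompact_Icc.image_of_continuousOn hv').isBounded.exists_norm_le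
  have hLip : ∀ x ∈ Icc a t, ‖v x - v t‖ ≤ M * (t - x) := fun x hx => by
    rw [norm_sub_rev]
    exact norm_image_sub_le_of_norm_deriv_le_segment'
      (fun s hs => (hv s ⟨hx.1.trans hs.1, hs.2⟩).hasDerivWithinAt)
      (fun s hs => hM _ (mem_image_of_mem _ ⟨hx.1.trans hs.1, hs.2.le⟩)) t
      (right_mem_Icc.mpr hx.2)
  have hlim : Tendsto (fun x => rlKernel β (t - x) * ‖v x - v t‖ ^ 2) (𝓝[<] t) (𝓝 0) := by
    have hsq := (tendsto_rlKernel_sub_mul_sq (β := β) (by linarith) t).const_mul (M ^ 2)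
    rw [mul_zero] at hsq
    refine tendsto_of_tendsto_of_tendsto_of_le_of_le' tendsto_const_nhds hsq ?_ ?_
    · filter_upwards [self_mem_nhdsWithin] with x hx
      exact mul_nonneg (rlKernel_nonneg hβ0 (sub_pos.mpr hx).le) (sq_nonneg _)
    · filter_upwards [Ico_mem_nhdsLT hat] with x hx
      have hKx := rlKernel_nonneg hβ0 (sub_nonneg.mpr hx.2.le)
      calc rlKernel β (t - x) * ‖v x - v t‖ ^ 2
          ≤ rlKernel β (t - x) * (M * (t - x)) ^ 2 := by
            gcongr
            exact hLip x (Ico_subset_Icc_self hx)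
        _ = M ^ 2 * (rlKernel β (t - x) * (t - x) ^ 2) := by ring
  have hvc : ContinuousOn v (Icc a t) := fun s hs => (hv s hs).continuousAt.continuousWithinAt
  have key := integral_rlKernel_sub_mul_deriv_nonpos hβ0 hβ1 hat
    (fun s hs => ((hv s hs).sub_const (v t)).norm_sq)
    (continuousOn_const.mul ((hvc.sub continuousOn_const).inner hv'))
    (fun s _ => sq_nonneg _) hlim
  simp_rw [mul_left_comm _ (2 : ℝ), intervalIntegral.integral_const_mul] at key
  linarith

theorem stmt9_general {H : Type*} [NormedAddCommGroup H] [InnerProductSpace ℝ H] [CompleteSpace H]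
    (α T : ℝ) (hα0 : 0 < α) (hα1 : α < 1)
    (v v' : ℝ → H) (hderiv : ∀ s ∈ Set.Icc (0:ℝ) T, HasDerivAt v (v' s) s)
    (hcont : ContinuousOn v' (Set.Icc (0:ℝ) T)) :
    ∀ t ∈ Set.Ioc (0:ℝ) T,
      (∫ s in (0:ℝ)..t, rlKernel (1 - α) (t - s) * deriv (fun r => ‖v r‖ ^ 2) s) ≤
        2 * ⟪∫ s in (0:ℝ)..t, rlKernel (1 - α) (t - s) • v' s, v t⟫ := by
  rintro t ⟨ht0, htT⟩
  have hsub : uIcc 0 t ⊆ Icc 0 T := uIcc_of_le ht0.le ▸ Icc_subset_Icc_right htT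
  have hv : ∀ s ∈ uIcc 0 t, HasDerivAt v (v' s) s := fun s hs => hderiv s (hsub hs)
  have hv' : ContinuousOn v' (uIcc 0 t) := hcont.mono hsub
  have hvc : ContinuousOn v (uIcc 0 t) := fun s hs => (hv s hs).continuousAt.continuousWithinAt
  have hK := intervalIntegrable_rlKernel_sub (β := 1 - α) (by linarith) 0 t
  have hLHS : ∫ s in (0:ℝ)..t, rlKernel (1 - α) (t - s) * deriv (fun r => ‖v r‖ ^ 2) s
      = 2 * ∫ s in (0:ℝ)..t, rlKernel (1 - α) (t - s) * ⟪v s, v' s⟫ := by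
    rw [← intervalIntegral.integral_const_mul]
    refine integral_congr fun s hs => ?_
    simp only [(hv s hs).norm_sq.deriv]
    ring
  have hRHS : ⟪∫ s in (0:ℝ)..t, rlKernel (1 - α) (t - s) • v' s, v t⟫
      = ∫ s in (0:ℝ)..t, rlKernel (1 - α) (t - s) * ⟪v t, v' s⟫ := by
    rw [real_inner_comm, ← innerSL_apply_apply ℝ,
      ← (innerSL ℝ (v t)).intervalIntegral_comp_comm (hK.smul_continuousOn hv')]
    simp only [innerSL_apply_apply, inner_smul_right]
  have key := integral_rlKernel_sub_mul_inner_sub_nonpos (β := 1 - α) (by linarith) (by linarith)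
    ht0 (uIcc_of_le ht0.le ▸ hv) (uIcc_of_le ht0.le ▸ hv')
  simp_rw [inner_sub_left, mul_sub] at key
  rw [integral_sub (hK.mul_continuousOn (hvc.inner hv'))
    (hK.mul_continuousOn (continuousOn_const.inner hv'))] at key
  rw [hLHS, hRHS]
  linarith

/-- Alikhanov's inequality: `∂_t^α(‖v‖²)(t) ≤ 2⟨(∂_t^α v)(t), v(t)⟩` for the Caputo
derivative `∂_t^α φ = 𝓘^{1-α}(φ')`. -/
theorem stmt9 {H : Type*} [NormedAddCommGroup H] [InnerProductSpace ℝ H] [CompleteSpace H]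
    (α T : ℝ) (hα0 : 0 < α) (hα1 : α < 1) (hT : 0 < T)
    (v v' : ℝ → H) (hderiv : ∀ s ∈ Set.Icc (0:ℝ) T, HasDerivAt v (v' s) s)
    (hcont : ContinuousOn v' (Set.Icc (0:ℝ) T)) :
    ∀ t ∈ Set.Ioc (0:ℝ) T,
      (∫ s in (0:ℝ)..t, rlKernel (1 - α) (t - s) * deriv (fun r => ‖v r‖ ^ 2) s) ≤
        2 * ⟪∫ s in (0:ℝ)..t, rlKernel (1 - α) (t - s) • v' s, v t⟫ :=
  stmt9_general α T hα0 hα1 v v' hderiv hcont
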